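/- There exists a universal constant C > 0 such that the following holds. Let d be a positive integer, let ξ and ξ′ be independent Rademacher vectors in {−1,1}^d, and let A ∈ ℝ^{d×d} satisfy 0 < ‖A‖_op ≤ 1/32. Then E[exp(ξᵀAξ′)] ≤ 1 + C · ‖A‖_F · exp(4‖A‖_F²). -/

import Mathlib

open Matrix MeasureTheory

/-- The Frobenius norm of a square real matrix. -/
noncomputable def frobNorm {d : ℕ} (A : Matrix (Fin d) (Fin d) ℝ) : ℝ :=
  Real.sqrt (∑ i, ∑ j, A i j ^ 2)

/-- The (ℓ₂ → ℓ₂) operator norm of a square real matrix. -/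
noncomputable def opNorm {d : ℕ} (A : Matrix (Fin d) (Fin d) ℝ) : ℝ :=
  ‖Matrix.toEuclideanCLM (𝕜 := ℝ) A‖

/-- The ±1 sign associated with a Boolean (uniform Booleans model Rademacher signs). -/
def sgn (b : Bool) : ℝ := if b then 1 else -1

lemma sgn_sq (b : Bool) : sgn b ^ 2 = 1 := by cases b <;> simp [sgn]

lemma sum_cons (n : ℕ) (f : (Fin (n+1) → Bool) → ℝ) :
    ∑ ε : Fin (n+1) → Bool, f ε
      = ∑ ε' : Fin n → Bool, ∑ s : Bool, f (Fin.cons s ε') := by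
  rw [← (Fin.consEquiv (fun _ : Fin (n+1) => Bool)).sum_comp f, Fintype.sum_prod_type]
  exact Finset.sum_comm

lemma quad_decomp (n : ℕ) (M : Fin (n+1) → Fin (n+1) → ℝ)
    (hs : ∀ i j, M i j = M j i) (t : ℝ) (x : Fin n → ℝ) :
    (∑ i, ∑ j, (Fin.cons t x : Fin (n+1) → ℝ) i * M i j * (Fin.cons t x : Fin (n+1) → ℝ) j)
    = M 0 0 * t^2 + 2 * t * (∑ j, M 0 j.succ * x j)
      + ∑ i, ∑ j, x i * M i.succ j.succ * x j := by
  simp only [Fin.sum_univ_succ, Fin.cons_zero, Fin.cons_succ]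
  have h : ∀ i : Fin n, M i.succ 0 = M 0 i.succ := fun i => hs _ _
  simp only [h, Finset.sum_add_distrib]
  have h2 : ∑ i : Fin n, x i * M 0 i.succ * t = t * ∑ j : Fin n, M 0 j.succ * x j := by
    rw [Finset.mul_sum]; exact Finset.sum_congr rfl fun i _ => by ring
  have h3 : ∑ i : Fin n, t * M 0 i.succ * x i = t * ∑ j : Fin n, M 0 j.succ * x j := by
    rw [Finset.mul_sum]; exact Finset.sum_congr rfl fun i _ => by ring
  rw [h2, h3]; ring

lemma cons_ne_zero_of_fst (n : ℕ) (t : ℝ) (x : Fin n → ℝ) (ht : t ≠ 0) :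
    (Fin.cons t x : Fin (n+1) → ℝ) ≠ 0 := by
  intro h; exact ht (by simpa using congrFun h 0)

lemma cons_ne_zero_of_snd (n : ℕ) (t : ℝ) (x : Fin n → ℝ) (hx : x ≠ 0) :
    (Fin.cons t x : Fin (n+1) → ℝ) ≠ 0 := by
  intro h; apply hx; funext j; simpa using congrFun h j.succ

/-- Core induction: subgaussian-type bound for the Rademacher quadratic form. -/
lemma lemA (n : ℕ) : ∀ (M : Fin n → Fin n → ℝ),
    (∀ i j, M i j = M j i) →
    (∀ x : Fin n → ℝ, 0 ≤ ∑ i, ∑ j, x i * M i j * x j) →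
    (∀ x : Fin n → ℝ, x ≠ 0 → 2 * (∑ i, ∑ j, x i * M i j * x j) < ∑ i, (x i)^2) →
    (∑ ε : Fin n → Bool, Real.exp ((∑ i, ∑ j, sgn (ε i) * M i j * sgn (ε j)) / 2))
      ≤ 2^n * Real.exp (∑ i, M i i) := by
  induction n with
  | zero => intro M _ _ _; simp
  | succ n IH =>
    intro M hs hpsd hpd
    set m : ℝ := M 0 0 with hm
    set b : Fin n → ℝ := fun j => M 0 j.succ with hbdef
    set M' : Fin n → Fin n → ℝ := fun i j => M i.succ j.succ with hM'def
    set M'' : Fin n → Fin n → ℝ := fun i j => M' i j + b i * b j with hM''def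
    have hm0 : 0 ≤ m := by
      have h := hpsd (Fin.cons 1 0)
      rw [quad_decomp n M hs 1 0] at h
      simpa using h
    have h1m : 2 * m < 1 := by
      have h := hpd (Fin.cons 1 0) (cons_ne_zero_of_fst n 1 0 one_ne_zero)
      rw [quad_decomp n M hs 1 0] at h
      simp only [Fin.sum_univ_succ, Fin.cons_zero, Fin.cons_succ] at h
      simpa using h
    have hQ'psd : ∀ x : Fin n → ℝ, 0 ≤ ∑ i, ∑ j, x i * M' i j * x j := by
      intro x
      have h := hpsd (Fin.cons 0 x)
      rw [quad_decomp n M hs 0 x] at h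
      simp only [hM'def]
      simpa using h
    have hQ'pd : ∀ x : Fin n → ℝ, x ≠ 0 →
        2 * (∑ i, ∑ j, x i * M' i j * x j) < ∑ i, (x i)^2 := by
      intro x hx
      have h := hpd (Fin.cons 0 x) (cons_ne_zero_of_snd n 0 x hx)
      rw [quad_decomp n M hs 0 x] at h
      simp only [Fin.sum_univ_succ, Fin.cons_zero, Fin.cons_succ] at h
      simp only [hM'def]
      simpa using h
    have hQ''eq : ∀ x : Fin n → ℝ,
        (∑ i, ∑ j, x i * M'' i j * x j)
          = (∑ i, ∑ j, x i * M' i j * x j) + (∑ j, b j * x j)^2 := by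
      intro x
      have e1 : ∀ i : Fin n, ∑ j, x i * M'' i j * x j
          = (∑ j, x i * M' i j * x j) + (x i * b i) * (∑ j, b j * x j) := by
        intro i
        rw [Finset.mul_sum, ← Finset.sum_add_distrib]
        exact Finset.sum_congr rfl fun j _ => by simp only [hM''def]; ring
      rw [Finset.sum_congr rfl fun i _ => e1 i, Finset.sum_add_distrib, ← Finset.sum_mul]
      congr 1
      have : ∑ i : Fin n, x i * b i = ∑ j : Fin n, b j * x j :=
        Finset.sum_congr rfl fun i _ => by ring
      rw [this]; ring
    have hb : (∑ j, b j * b j) ≤ m / 2 := by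
      have hd : ∀ t : ℝ, 0 ≤ m * (t*t) + (2 * ∑ j, b j * b j) * t
          + ∑ i, ∑ j, b i * M' i j * b j := by
        intro t
        have h := hpsd (Fin.cons t b)
        rw [quad_decomp n M hs t b] at h
        simp only [hM'def]
        calc (0:ℝ) ≤ _ := h
        _ = _ := by ring
      have h := discrim_le_zero hd
      unfold discrim at h
      rcases le_or_gt (∑ j, b j * b j) 0 with h0 | h0
      · linarith
      · have hbne : b ≠ 0 := by
          intro hb0; rw [hb0] at h0; simp at h0
        have h2 := hQ'pd b hbne
        have hsq : ∑ i, (b i)^2 = ∑ j, b j * b j :=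
          Finset.sum_congr rfl fun i _ => sq (b i) ▸ by ring
        rw [hsq] at h2
        nlinarith
    have hM''s : ∀ i j, M'' i j = M'' j i := by
      intro i j; simp only [hM''def, hM'def]; rw [hs i.succ j.succ]; ring
    have hM''psd : ∀ x : Fin n → ℝ, 0 ≤ ∑ i, ∑ j, x i * M'' i j * x j := by
      intro x; rw [hQ''eq x]
      have := hQ'psd x
      nlinarith [sq_nonneg (∑ j, b j * x j)]
    have hM''pd : ∀ x : Fin n → ℝ, x ≠ 0 →
        2 * (∑ i, ∑ j, x i * M'' i j * x j) < ∑ i, (x i)^2 := by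
      intro x hx
      rw [hQ''eq x]
      set P : ℝ := ∑ j, b j * x j with hP
      have hu : 0 < 1 - 2*m := by linarith
      set t : ℝ := 2 * P / (1 - 2*m) with htdef
      have h := hpd (Fin.cons t x) (cons_ne_zero_of_snd n t x hx)
      rw [quad_decomp n M hs t x] at h
      simp only [Fin.sum_univ_succ, Fin.cons_zero, Fin.cons_succ] at h
      have hbP : ∑ j, M 0 j.succ * x j = P := by
        rw [hP, hbdef]
      rw [hbP] at h
      have htu : t * (1 - 2*m) = 2 * P := by rw [htdef, div_mul_cancel₀ _ hu.ne']
      simp only [hM'def] at *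
      nlinarith [sq_nonneg P, sq_nonneg t, mul_pos hu hu]
    have key : ∀ ε' : Fin n → Bool,
        (∑ s : Bool, Real.exp ((∑ i, ∑ j,
            sgn ((Fin.cons s ε' : Fin (n+1) → Bool) i) * M i j * sgn ((Fin.cons s ε' : Fin (n+1) → Bool) j)) / 2))
        ≤ 2 * Real.exp (m/2) *
            Real.exp ((∑ i, ∑ j, sgn (ε' i) * M'' i j * sgn (ε' j)) / 2) := by
      intro ε'
      set y : Fin n → ℝ := fun i => sgn (ε' i) with hy
      have hcons : ∀ s : Bool, (fun i => sgn ((Fin.cons s ε' : Fin (n+1) → Bool) i))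
          = (Fin.cons (sgn s) y : Fin (n+1) → ℝ) := by
        intro s; funext i
        refine Fin.cases ?_ ?_ i <;> simp [Fin.cons_zero, Fin.cons_succ, hy]
      have hq : ∀ s : Bool, (∑ i, ∑ j, sgn ((Fin.cons s ε' : Fin (n+1) → Bool) i) * M i j * sgn ((Fin.cons s ε' : Fin (n+1) → Bool) j))
          = m + 2 * sgn s * (∑ j, b j * y j) + ∑ i, ∑ j, y i * M' i j * y j := by
        intro s
        have := quad_decomp n M hs (sgn s) y
        simp only [← hcons s] at this
        rw [this, sgn_sq s]
        simp only [hbdef, hM'def]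
        ring
      set P : ℝ := ∑ j, b j * y j with hP
      set Q : ℝ := ∑ i, ∑ j, y i * M' i j * y j with hQ
      have hsum : (∑ s : Bool, Real.exp ((∑ i, ∑ j,
            sgn ((Fin.cons s ε' : Fin (n+1) → Bool) i) * M i j * sgn ((Fin.cons s ε' : Fin (n+1) → Bool) j)) / 2))
          = Real.exp ((m + Q)/2) * (Real.exp P + Real.exp (-P)) := by
        rw [Fintype.sum_bool, hq true, hq false]
        have st : sgn true = 1 := rfl
        have sf : sgn false = -1 := rfl
        rw [st, sf]
        rw [show (m + 2*1*P + Q)/2 = (m+Q)/2 + P from by ring,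
            show (m + 2*(-1)*P + Q)/2 = (m+Q)/2 + -P from by ring,
            Real.exp_add, Real.exp_add, mul_add]
      rw [hsum]
      have hcosh : Real.exp P + Real.exp (-P) ≤ 2 * Real.exp (P^2/2) := by
        have h1 : Real.cosh P ≤ Real.exp (P^2/2) := Real.cosh_le_exp_half_sq P
        rw [Real.cosh_eq] at h1
        linarith
      have hrw : (∑ i, ∑ j, sgn (ε' i) * M'' i j * sgn (ε' j)) = Q + P^2 := by
        have := hQ''eq y
        simpa [hy, hP, hQ] using this
      rw [hrw]
      calc Real.exp ((m + Q)/2) * (Real.exp P + Real.exp (-P))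
          ≤ Real.exp ((m + Q)/2) * (2 * Real.exp (P^2/2)) := by
            exact mul_le_mul_of_nonneg_left hcosh (Real.exp_nonneg _)
        _ = 2 * Real.exp (m/2) * Real.exp ((Q + P^2)/2) := by
            have e1 : Real.exp ((m + Q)/2) = Real.exp (m/2) * Real.exp (Q/2) := by
              rw [← Real.exp_add]; congr 1; ring
            have e2 : Real.exp ((Q + P^2)/2) = Real.exp (Q/2) * Real.exp (P^2/2) := by
              rw [← Real.exp_add]; congr 1; ring
            rw [e1, e2]; ring
    calc (∑ ε : Fin (n+1) → Bool, Real.exp ((∑ i, ∑ j, sgn (ε i) * M i j * sgn (ε j)) / 2))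
        = ∑ ε' : Fin n → Bool, ∑ s : Bool, Real.exp ((∑ i, ∑ j,
            sgn ((Fin.cons s ε' : Fin (n+1) → Bool) i) * M i j * sgn ((Fin.cons s ε' : Fin (n+1) → Bool) j)) / 2) :=
          sum_cons n _
      _ ≤ ∑ ε' : Fin n → Bool, 2 * Real.exp (m/2) *
            Real.exp ((∑ i, ∑ j, sgn (ε' i) * M'' i j * sgn (ε' j)) / 2) :=
          Finset.sum_le_sum fun ε' _ => key ε'
      _ = 2 * Real.exp (m/2) * ∑ ε' : Fin n → Bool,
            Real.exp ((∑ i, ∑ j, sgn (ε' i) * M'' i j * sgn (ε' j)) / 2) := by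
          rw [Finset.mul_sum]
      _ ≤ 2 * Real.exp (m/2) * (2^n * Real.exp (∑ i, M'' i i)) := by
          apply mul_le_mul_of_nonneg_left (IH M'' hM''s hM''psd hM''pd)
          positivity
      _ ≤ 2^(n+1) * Real.exp (∑ i, M i i) := by
          have hdiag : ∑ i, M'' i i = (∑ i, M' i i) + ∑ j, b j * b j := by
            simp only [hM''def, Finset.sum_add_distrib]
          have htr : (∑ i : Fin (n+1), M i i) = m + ∑ i : Fin n, M' i i := by
            rw [Fin.sum_univ_succ]
          rw [hdiag, htr]
          have : Real.exp (m/2) * Real.exp ((∑ i, M' i i) + ∑ j, b j * b j)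
              ≤ Real.exp (m + ∑ i : Fin n, M' i i) := by
            rw [← Real.exp_add]
            apply Real.exp_le_exp.2
            linarith
          calc 2 * Real.exp (m/2) * (2^n * Real.exp ((∑ i, M' i i) + ∑ j, b j * b j))
              = 2^(n+1) * (Real.exp (m/2) * Real.exp ((∑ i, M' i i) + ∑ j, b j * b j)) := by
                ring
            _ ≤ 2^(n+1) * Real.exp (m + ∑ i : Fin n, M' i i) := by
                apply mul_le_mul_of_nonneg_left this; positivity

/-- Product formula for the Rademacher mgf of a linear form. -/
lemma lemL (n : ℕ) : ∀ c : Fin n → ℝ,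
    ∑ ε : Fin n → Bool, Real.exp (∑ i, sgn (ε i) * c i)
      = ∏ i, (Real.exp (c i) + Real.exp (-c i)) := by
  induction n with
  | zero => intro c; simp
  | succ n IH =>
    intro c
    rw [sum_cons, Fin.prod_univ_succ]
    have key : ∀ ε' : Fin n → Bool,
        (∑ s : Bool, Real.exp (∑ i, sgn ((Fin.cons s ε' : Fin (n+1) → Bool) i) * c i))
          = (Real.exp (c 0) + Real.exp (-c 0)) * Real.exp (∑ i, sgn (ε' i) * c i.succ) := by
      intro ε'
      have h : ∀ s : Bool,
          Real.exp (∑ i, sgn ((Fin.cons s ε' : Fin (n+1) → Bool) i) * c i)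
            = Real.exp (sgn s * c 0) * Real.exp (∑ i, sgn (ε' i) * c i.succ) := by
        intro s
        rw [Fin.sum_univ_succ, Real.exp_add]
        simp [Fin.cons_zero, Fin.cons_succ]
      rw [Fintype.sum_bool, h true, h false]
      have st : sgn true = 1 := rfl
      have sf : sgn false = -1 := rfl
      rw [st, sf]; ring_nf
    rw [Finset.sum_congr rfl fun ε' _ => key ε', ← Finset.mul_sum, IH (fun i => c i.succ)]

lemma op_bound {d : ℕ} (A : Matrix (Fin d) (Fin d) ℝ) (x : Fin d → ℝ) :
    ∑ i, (∑ j, A i j * x j)^2 ≤ (opNorm A)^2 * ∑ j, (x j)^2 := by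
  set v : EuclideanSpace ℝ (Fin d) := (WithLp.equiv 2 (Fin d → ℝ)).symm x with hv
  have h1 : ‖Matrix.toEuclideanCLM (𝕜 := ℝ) A v‖ ≤ opNorm A * ‖v‖ :=
    ContinuousLinearMap.le_opNorm _ v
  have h2 : Matrix.toEuclideanCLM (𝕜 := ℝ) A v
      = (WithLp.equiv 2 (Fin d → ℝ)).symm (A.mulVec x) := by
    rw [hv]; rfl
  have hnv : ‖v‖ = Real.sqrt (∑ j, (x j)^2) := by
    rw [hv, EuclideanSpace.norm_eq]
    congr 1
    refine Finset.sum_congr rfl fun j _ => ?_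
    rw [Real.norm_eq_abs, sq_abs]
    rfl
  have hnAv : ‖Matrix.toEuclideanCLM (𝕜 := ℝ) A v‖ = Real.sqrt (∑ i, (∑ j, A i j * x j)^2) := by
    rw [h2, EuclideanSpace.norm_eq]
    congr 1
    refine Finset.sum_congr rfl fun i _ => ?_
    rw [Real.norm_eq_abs, sq_abs]
    have : ((WithLp.equiv 2 (Fin d → ℝ)).symm (A.mulVec x)) i = A.mulVec x i := rfl
    rw [this]
    simp [Matrix.mulVec, dotProduct]
  rw [hnv, hnAv] at h1
  have hs1 : (0:ℝ) ≤ ∑ i, (∑ j, A i j * x j)^2 := by positivity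
  have hs2 : (0:ℝ) ≤ ∑ j, (x j)^2 := by positivity
  have h0 : (0:ℝ) ≤ opNorm A := norm_nonneg _
  nlinarith [Real.sq_sqrt hs1, Real.sq_sqrt hs2, Real.sqrt_nonneg (∑ i, (∑ j, A i j * x j)^2),
    Real.sqrt_nonneg (∑ j, (x j)^2)]

lemma lemQeq {d : ℕ} (A : Matrix (Fin d) (Fin d) ℝ) (y : Fin d → ℝ) :
    (∑ j, ∑ k, y j * (∑ i, A i j * A i k) * y k) = ∑ i, (∑ j, A i j * y j)^2 := by
  have e1 : ∀ j k : Fin d, y j * (∑ i, A i j * A i k) * y k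
      = ∑ i, (A i j * y j) * (A i k * y k) := by
    intro j k
    rw [Finset.mul_sum, Finset.sum_mul]
    exact Finset.sum_congr rfl fun i _ => by ring
  have e2 : ∀ i : Fin d, (∑ j, A i j * y j)^2
      = ∑ j, ∑ k, (A i j * y j) * (A i k * y k) := by
    intro i
    rw [sq, Finset.sum_mul_sum]
  rw [Finset.sum_congr rfl fun i _ => e2 i]
  rw [Finset.sum_congr rfl fun j (_ : j ∈ Finset.univ) =>
    Finset.sum_congr rfl fun k _ => e1 j k]
  calc (∑ j, ∑ k, ∑ i, (A i j * y j) * (A i k * y k))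
      = ∑ j, ∑ i, ∑ k, (A i j * y j) * (A i k * y k) :=
        Finset.sum_congr rfl fun j _ => Finset.sum_comm
    _ = ∑ i, ∑ j, ∑ k, (A i j * y j) * (A i k * y k) := Finset.sum_comm

/-- moment generating function bound for the decoupled Rademacher chaos:
there is a universal constant `C > 0` with
`E exp(ξᵀAξ′) ≤ 1 + C ‖A‖_F exp(4‖A‖_F²)` whenever `0 < ‖A‖_op ≤ 1/32`. -/
theorem stmt_7 :
    ∃ C : ℝ, 0 < C ∧
      ∀ (d : ℕ) (A : Matrix (Fin d) (Fin d) ℝ),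
        0 < opNorm A → opNorm A ≤ 1 / 32 →
        (∫ ε : (Fin d → Bool) × (Fin d → Bool),
            Real.exp (∑ i, ∑ j, sgn (ε.1 i) * A i j * sgn (ε.2 j))
          ∂(PMF.uniformOfFintype ((Fin d → Bool) × (Fin d → Bool))).toMeasure) ≤
        1 + C * frobNorm A * Real.exp (4 * frobNorm A ^ 2) := by
  refine ⟨1, one_pos, fun d A hop hop32 => ?_⟩
  set F : ℝ := frobNorm A with hFdef
  have hsum_nonneg : (0:ℝ) ≤ ∑ i, ∑ j, A i j ^ 2 := by positivity
  have hFsq : F^2 = ∑ i, ∑ j, A i j ^ 2 := Real.sq_sqrt hsum_nonneg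
  -- A ≠ 0 hence F > 0
  have hAne : A ≠ 0 := by
    intro h
    rw [h] at hop
    have hz : Matrix.toEuclideanCLM (𝕜 := ℝ) (0 : Matrix (Fin d) (Fin d) ℝ) = 0 := map_zero _
    rw [opNorm, hz, norm_zero] at hop
    exact lt_irrefl 0 hop
  have hFpos : 0 < F := by
    apply Real.sqrt_pos.2
    obtain ⟨i, j, hij⟩ : ∃ i j, A i j ≠ 0 := by
      by_contra hc
      push_neg at hc
      exact hAne (by ext i j; exact hc i j)
    apply Finset.sum_pos' (fun i _ => Finset.sum_nonneg fun j _ => sq_nonneg _)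
    exact ⟨i, Finset.mem_univ i, Finset.sum_pos'
      (fun j _ => sq_nonneg _) ⟨j, Finset.mem_univ j, by positivity⟩⟩
  -- the matrix M = AᵀA as explicit sums
  set M : Fin d → Fin d → ℝ := fun j k => ∑ i, A i j * A i k with hMdef
  have hMs : ∀ j k, M j k = M k j := by
    intro j k; simp only [hMdef]
    exact Finset.sum_congr rfl fun i _ => by ring
  have hQM : ∀ y : Fin d → ℝ, (∑ j, ∑ k, y j * M j k * y k) = ∑ i, (∑ j, A i j * y j)^2 :=
    fun y => lemQeq A y
  have hpsd : ∀ y : Fin d → ℝ, 0 ≤ ∑ j, ∑ k, y j * M j k * y k := by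
    intro y; rw [hQM y]; positivity
  have hpd : ∀ y : Fin d → ℝ, y ≠ 0 → 2 * (∑ j, ∑ k, y j * M j k * y k) < ∑ j, (y j)^2 := by
    intro y hy
    rw [hQM y]
    have hb := op_bound A y
    have hy2 : 0 < ∑ j, (y j)^2 := by
      obtain ⟨j, hj⟩ : ∃ j, y j ≠ 0 := by
        by_contra hc; push_neg at hc; exact hy (funext hc)
      apply Finset.sum_pos' (fun j _ => sq_nonneg _) ⟨j, Finset.mem_univ j, by positivity⟩
    have hopsq : (opNorm A)^2 ≤ (1/32:ℝ)^2 := by nlinarith [hop.le]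
    nlinarith
  -- trace of M
  have htr : (∑ j, M j j) = F^2 := by
    rw [hFsq, hMdef]
    rw [Finset.sum_comm]
    exact Finset.sum_congr rfl fun i _ => Finset.sum_congr rfl fun j _ => (sq (A i j)).symm
  -- compute the integral as a finite sum
  have hInt : (∫ ε : (Fin d → Bool) × (Fin d → Bool),
        Real.exp (∑ i, ∑ j, sgn (ε.1 i) * A i j * sgn (ε.2 j))
      ∂(PMF.uniformOfFintype ((Fin d → Bool) × (Fin d → Bool))).toMeasure)
      = ((2:ℝ)^d * 2^d)⁻¹ * ∑ ε : (Fin d → Bool) × (Fin d → Bool),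
          Real.exp (∑ i, ∑ j, sgn (ε.1 i) * A i j * sgn (ε.2 j)) := by
    rw [PMF.integral_eq_sum, Finset.mul_sum]
    refine Finset.sum_congr rfl fun ε _ => ?_
    rw [PMF.uniformOfFintype_apply]
    simp [Fintype.card_prod, Fintype.card_fun, smul_eq_mul]
  -- main bound on the sum
  have hmain : (∑ ε : (Fin d → Bool) × (Fin d → Bool),
        Real.exp (∑ i, ∑ j, sgn (ε.1 i) * A i j * sgn (ε.2 j)))
      ≤ (2:ℝ)^d * 2^d * Real.exp (F^2) := by
    rw [Fintype.sum_prod_type, Finset.sum_comm]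
    have step : ∀ ε2 : Fin d → Bool,
        (∑ ε1 : Fin d → Bool, Real.exp (∑ i, ∑ j, sgn (ε1 i) * A i j * sgn (ε2 j)))
          ≤ 2^d * Real.exp ((∑ j, ∑ k, sgn (ε2 j) * M j k * sgn (ε2 k)) / 2) := by
      intro ε2
      set c : Fin d → ℝ := fun i => ∑ j, A i j * sgn (ε2 j) with hc
      have harg : ∀ ε1 : Fin d → Bool,
          (∑ i, ∑ j, sgn (ε1 i) * A i j * sgn (ε2 j)) = ∑ i, sgn (ε1 i) * c i := by
        intro ε1
        refine Finset.sum_congr rfl fun i _ => ?_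
        rw [hc, Finset.mul_sum]
        exact Finset.sum_congr rfl fun j _ => by ring
      calc (∑ ε1 : Fin d → Bool, Real.exp (∑ i, ∑ j, sgn (ε1 i) * A i j * sgn (ε2 j)))
          = ∑ ε1 : Fin d → Bool, Real.exp (∑ i, sgn (ε1 i) * c i) :=
            Finset.sum_congr rfl fun ε1 _ => by rw [harg ε1]
        _ = ∏ i, (Real.exp (c i) + Real.exp (-c i)) := lemL d c
        _ ≤ ∏ i, (2 * Real.exp (c i ^ 2 / 2)) := by
            apply Finset.prod_le_prod (fun i _ => by positivity)
            intro i _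
            have h1 : Real.cosh (c i) ≤ Real.exp ((c i)^2/2) := Real.cosh_le_exp_half_sq (c i)
            rw [Real.cosh_eq] at h1
            linarith
        _ = 2^d * Real.exp ((∑ i, c i ^ 2) / 2) := by
            rw [Finset.prod_mul_distrib, Finset.prod_const, ← Real.exp_sum,
              Finset.card_univ, Fintype.card_fin, Finset.sum_div]
        _ = 2^d * Real.exp ((∑ j, ∑ k, sgn (ε2 j) * M j k * sgn (ε2 k)) / 2) := by
            have harg2 : (∑ j, ∑ k, sgn (ε2 j) * M j k * sgn (ε2 k)) = ∑ i, c i ^ 2 := by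
              rw [hQM (fun j => sgn (ε2 j))]
            rw [harg2]
    calc (∑ ε2 : Fin d → Bool, ∑ ε1 : Fin d → Bool,
          Real.exp (∑ i, ∑ j, sgn (ε1 i) * A i j * sgn (ε2 j)))
        ≤ ∑ ε2 : Fin d → Bool,
            2^d * Real.exp ((∑ j, ∑ k, sgn (ε2 j) * M j k * sgn (ε2 k)) / 2) :=
          Finset.sum_le_sum fun ε2 _ => step ε2
      _ = 2^d * ∑ ε2 : Fin d → Bool,
            Real.exp ((∑ j, ∑ k, sgn (ε2 j) * M j k * sgn (ε2 k)) / 2) := by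
          rw [Finset.mul_sum]
      _ ≤ 2^d * (2^d * Real.exp (∑ j, M j j)) := by
          apply mul_le_mul_of_nonneg_left (lemA d M hMs hpsd hpd)
          positivity
      _ = (2:ℝ)^d * 2^d * Real.exp (F^2) := by rw [htr]; ring
  -- final scalar inequality
  have hfinal : Real.exp (F^2) ≤ 1 + 1 * F * Real.exp (4 * F^2) := by
    have hexp_le : Real.exp (F^2) ≤ Real.exp (4 * F^2) :=
      Real.exp_le_exp.2 (by nlinarith)
    rcases le_or_gt F 1 with hF1 | hF1
    · have h1 : Real.exp (F^2) ≤ 1 + F^2 * Real.exp (F^2) := by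
        have := Real.add_one_le_exp (-(F^2))
        have hp := Real.exp_pos (F^2)
        have hm : Real.exp (-(F^2)) * Real.exp (F^2) = 1 := by
          rw [← Real.exp_add]; simp
        nlinarith
      have h2 : F^2 * Real.exp (F^2) ≤ F * Real.exp (4 * F^2) := by
        apply mul_le_mul _ hexp_le (Real.exp_pos _).le hFpos.le
        nlinarith
      linarith
    · have h2 : Real.exp (4 * F^2) ≤ F * Real.exp (4 * F^2) :=
        le_mul_of_one_le_left (Real.exp_pos _).le hF1.le
      have := Real.exp_pos (4 * F^2)
      nlinarith
  -- put it together
  rw [hInt]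
  have hN : (0:ℝ) < (2:ℝ)^d * 2^d := by positivity
  calc ((2:ℝ)^d * 2^d)⁻¹ * ∑ ε : (Fin d → Bool) × (Fin d → Bool),
        Real.exp (∑ i, ∑ j, sgn (ε.1 i) * A i j * sgn (ε.2 j))
      ≤ ((2:ℝ)^d * 2^d)⁻¹ * ((2:ℝ)^d * 2^d * Real.exp (F^2)) := by
        apply mul_le_mul_of_nonneg_left hmain (by positivity)
    _ = Real.exp (F^2) := by field_simp
    _ ≤ 1 + 1 * F * Real.exp (4 * F^2) := hfinal
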